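/- arXiv:2109.05109 — 3 statements merged into one kernel-verified Lean document; each statement's English description precedes it below -/
import Mathlib

section
/- With f1(x) = 2x^2 for |x| ≤ 1, 4|x| - 2 for |x| > 1, and f2(x) = f3(x) = -0.5x^2 for |x| ≤ 1, -|x|+0.5 for |x| > 1: for every x > 1, the derivatives satisfy f1'(x) = 4 and f2'(x) = f3'(x) = -1, so that 0.1 · (f1'(x)/(2√2)) + 0.1 · (f2'(x)/√(1/2)) + 0.1 · (f3'(x)/√(1/2)) < 0, i.e., one step of per-node normalized gradient descent averaged across nodes moves the average iterate away from the stationary point 0 (increases x). -/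
noncomputable def f1 (x : ℝ) : ℝ := if |x| ≤ 1 then 2 * x ^ 2 else 4 * |x| - 2

noncomputable def f2 (x : ℝ) : ℝ := if |x| ≤ 1 then -0.5 * x ^ 2 else -|x| + 0.5

noncomputable def f3 (x : ℝ) : ℝ := f2 x

lemma f1_eventually {x : ℝ} (hx : 1 < x) : f1 =ᶠ[nhds x] fun y => 4 * y - 2 := by
  filter_upwards [eventually_gt_nhds hx] with y hy
  have h1 : |y| = y := abs_of_pos (by linarith)
  simp [f1, h1, not_le.mpr hy]

lemma f2_eventually {x : ℝ} (hx : 1 < x) : f2 =ᶠ[nhds x] fun y => -y + 0.5 := by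
  filter_upwards [eventually_gt_nhds hx] with y hy
  have h1 : |y| = y := abs_of_pos (by linarith)
  simp [f2, h1, not_le.mpr hy]

lemma deriv_f1 {x : ℝ} (hx : 1 < x) : deriv f1 x = 4 := by
  rw [Filter.EventuallyEq.deriv_eq (f1_eventually hx)]
  have h : HasDerivAt (fun y : ℝ => 4 * y - 2) 4 x := by
    simpa using ((hasDerivAt_id x).const_mul 4).sub_const 2
  exact h.deriv

lemma deriv_f2 {x : ℝ} (hx : 1 < x) : deriv f2 x = -1 := by
  rw [Filter.EventuallyEq.deriv_eq (f2_eventually hx)]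
  have h : HasDerivAt (fun y : ℝ => -y + 0.5) (-1) x := by
    simpa using (hasDerivAt_id x).neg.add_const 0.5
  exact h.deriv

theorem naive_local_amsgrad_divergence_step (x : ℝ) (hx : 1 < x) :
    deriv f1 x = 4 ∧ deriv f2 x = -1 ∧ deriv f3 x = -1 ∧
    0.1 * (deriv f1 x / (2 * Real.sqrt 2)) + 0.1 * (deriv f2 x / Real.sqrt (1 / 2))
      + 0.1 * (deriv f3 x / Real.sqrt (1 / 2)) < 0 := by
  have h1 := deriv_f1 hx
  have h2 := deriv_f2 hx
  have h3 : deriv f3 x = -1 := by rw [show f3 = f2 from rfl]; exact h2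
  refine ⟨h1, h2, h3, ?_⟩
  rw [h1, h2, h3]
  have hs2 : Real.sqrt 2 > 1 := by
    rw [show (1:ℝ) = Real.sqrt 1 by simp]
    exact Real.sqrt_lt_sqrt (by norm_num) (by norm_num)
  have hs2' : (0:ℝ) < Real.sqrt 2 := by linarith
  have hhalf : Real.sqrt (1/2) = 1 / Real.sqrt 2 := by
    rw [one_div, Real.sqrt_inv, one_div]
  rw [hhalf]
  have hs : Real.sqrt 2 * Real.sqrt 2 = 2 := Real.mul_self_sqrt (by norm_num)
  have key : (0.1:ℝ) * (4 / (2 * Real.sqrt 2)) + 0.1 * (-1 / (1 / Real.sqrt 2))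
      + 0.1 * (-1 / (1 / Real.sqrt 2)) = (0.2 - 0.2 * 2) / Real.sqrt 2 := by
    field_simp
    nlinarith [hs]
  rw [key]
  apply div_neg_of_neg_of_pos <;> norm_num [hs2']
end

section
/- Let (v̂_t)_{t≥0} be a coordinatewise non-decreasing sequence in ℝ^d with (v̂_0)_j = ε > 0 for all j, and let (m̄_t) be a sequence in ℝ^d with ‖m̄_t‖_∞ ≤ G for all t. Then Σ_{t=1}^T ‖(β₁/(1-β₁))·(1/√(v̂_{t-1}) - 1/√(v̂_t)) ⊙ m̄_{t-1}‖² ≤ (β₁²/(1-β₁)²)·G²·d/ε, where ⊙ is coordinatewise product and the reciprocal square root is coordinatewise. -/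
theorem momentum_learning_rate_drift_bound
    (d T : ℕ) (ε G β₁ : ℝ) (hε : 0 < ε) (hβ₁ : 0 ≤ β₁) (hβ₁' : β₁ < 1)
    (v m : ℕ → Fin d → ℝ)
    (h0 : ∀ j, v 0 j = ε)
    (hmono : ∀ t j, v t j ≤ v (t + 1) j)
    (hm : ∀ t j, |m t j| ≤ G) :
    ∑ t ∈ Finset.Icc 1 T, ∑ j : Fin d,
        (β₁ / (1 - β₁) * (1 / Real.sqrt (v (t - 1) j) - 1 / Real.sqrt (v t j)) * m (t - 1) j) ^ 2
      ≤ β₁ ^ 2 / (1 - β₁) ^ 2 * G ^ 2 * (d : ℝ) / ε := by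
  set c : ℝ := β₁ / (1 - β₁) with hc
  rw [Finset.sum_comm]
  have key : ∀ j : Fin d,
      ∑ t ∈ Finset.Icc 1 T,
        (c * (1 / Real.sqrt (v (t - 1) j) - 1 / Real.sqrt (v t j)) * m (t - 1) j) ^ 2
      ≤ c ^ 2 * G ^ 2 / ε := by
    intro j
    have hG : 0 ≤ G := le_trans (abs_nonneg _) (hm 0 j)
    have hvε : ∀ t, ε ≤ v t j := by
      intro t
      induction t with
      | zero => rw [h0]
      | succ n ih => exact le_trans ih (hmono n j)
    set f : ℕ → ℝ := fun t => 1 / Real.sqrt (v t j) with hf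
    have hsε : 0 < Real.sqrt ε := Real.sqrt_pos.mpr hε
    have hfub : ∀ t, f t ≤ 1 / Real.sqrt ε := by
      intro t
      apply one_div_le_one_div_of_le hsε
      exact Real.sqrt_le_sqrt (hvε t)
    have hfpos : ∀ t, 0 < f t := by
      intro t
      apply one_div_pos.mpr
      exact Real.sqrt_pos.mpr (lt_of_lt_of_le hε (hvε t))
    have hfanti : ∀ t, f (t + 1) ≤ f t := by
      intro t
      apply one_div_le_one_div_of_le (Real.sqrt_pos.mpr (lt_of_lt_of_le hε (hvε t)))
      exact Real.sqrt_le_sqrt (hmono t j)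
    have hterm : ∀ t ∈ Finset.Icc 1 T,
        (c * (f (t - 1) - f t) * m (t - 1) j) ^ 2
          ≤ c ^ 2 * G ^ 2 * (1 / Real.sqrt ε) * (f (t - 1) - f t) := by
      intro t ht
      obtain ⟨ht1, -⟩ := Finset.mem_Icc.mp ht
      obtain ⟨s, rfl⟩ := Nat.exists_eq_add_of_le ht1
      have hts : 1 + s - 1 = s := by omega
      rw [hts, Nat.add_comm 1 s]
      have hΔ : 0 ≤ f s - f (s + 1) := by linarith [hfanti s]
      have hΔub : f s - f (s + 1) ≤ 1 / Real.sqrt ε :=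
        le_trans (by linarith [(hfpos (s + 1)).le]) (hfub s)
      have hm2 : (m s j) ^ 2 ≤ G ^ 2 := sq_le_sq' (by linarith [abs_le.mp (hm s j)]) (abs_le.mp (hm s j)).2
      have hΔ2 : (f s - f (s + 1)) ^ 2 ≤ (1 / Real.sqrt ε) * (f s - f (s + 1)) := by
        rw [sq]
        exact mul_le_mul_of_nonneg_right hΔub hΔ
      have hc2 : (0:ℝ) ≤ c ^ 2 := sq_nonneg c
      calc (c * (f s - f (s + 1)) * m s j) ^ 2
          = c ^ 2 * (f s - f (s + 1)) ^ 2 * (m s j) ^ 2 := by ring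
        _ ≤ c ^ 2 * (f s - f (s + 1)) ^ 2 * G ^ 2 := by
            apply mul_le_mul_of_nonneg_left hm2
            positivity
        _ ≤ c ^ 2 * ((1 / Real.sqrt ε) * (f s - f (s + 1))) * G ^ 2 := by
            apply mul_le_mul_of_nonneg_right _ (sq_nonneg G)
            exact mul_le_mul_of_nonneg_left hΔ2 hc2
        _ = c ^ 2 * G ^ 2 * (1 / Real.sqrt ε) * (f s - f (s + 1)) := by ring
    calc ∑ t ∈ Finset.Icc 1 T, (c * (f (t - 1) - f t) * m (t - 1) j) ^ 2
        ≤ ∑ t ∈ Finset.Icc 1 T, c ^ 2 * G ^ 2 * (1 / Real.sqrt ε) * (f (t - 1) - f t) :=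
          Finset.sum_le_sum hterm
      _ = c ^ 2 * G ^ 2 * (1 / Real.sqrt ε) * ∑ t ∈ Finset.Icc 1 T, (f (t - 1) - f t) := by
          rw [Finset.mul_sum]
      _ ≤ c ^ 2 * G ^ 2 * (1 / Real.sqrt ε) * (1 / Real.sqrt ε) := by
          apply mul_le_mul_of_nonneg_left _ (by positivity)
          have tel : ∀ n, ∑ t ∈ Finset.Icc 1 n, (f (t - 1) - f t) = f 0 - f n := by
            intro n
            induction n with
            | zero => simp
            | succ n ih =>
              rw [Finset.sum_Icc_succ_top (by omega), ih, Nat.add_sub_cancel]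
              ring
          rw [tel]
          calc f 0 - f T ≤ f 0 := by linarith [(hfpos T).le]
            _ ≤ 1 / Real.sqrt ε := hfub 0
      _ = c ^ 2 * G ^ 2 * ((1 / Real.sqrt ε) * (1 / Real.sqrt ε)) := by ring
      _ = c ^ 2 * G ^ 2 / ε := by
          rw [div_mul_div_comm, one_mul, Real.mul_self_sqrt hε.le, mul_one_div]
  calc ∑ j : Fin d, ∑ t ∈ Finset.Icc 1 T,
        (c * (1 / Real.sqrt (v (t - 1) j) - 1 / Real.sqrt (v t j)) * m (t - 1) j) ^ 2
      ≤ ∑ _j : Fin d, c ^ 2 * G ^ 2 / ε := Finset.sum_le_sum fun j _ => key j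
    _ = (d : ℝ) * (c ^ 2 * G ^ 2 / ε) := by
        rw [Finset.sum_const, Finset.card_fin, nsmul_eq_mul]
    _ = β₁ ^ 2 / (1 - β₁) ^ 2 * G ^ 2 * (d : ℝ) / ε := by
        rw [hc, div_pow]; ring
end

section
/- Let f = (1/N)Σ_i f_i with each ∇f_i L-Lipschitz, let v̂_t ∈ ℝ^d have coordinates in [ε, G²], and suppose ‖x̄_t - x_{t,i}‖² ≤ 4(k-1)²α²dG²/ε for all i. Then ‖((1/N)Σ_i ∇f_i(x_{t,i}))/v̂_t^{1/4}‖² ≥ ½‖∇f(x̄_t)/v̂_t^{1/4}‖² - 4L²(k-1)²α²dG²/ε^{1.5}. -/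
theorem measure_conversion_bound
    (d N k : ℕ) (hN : 0 < N) (L ε G α : ℝ) (hL : 0 ≤ L) (hε : 0 < ε) (hG : 0 < G)
    (gf : Fin N → EuclideanSpace ℝ (Fin d) → EuclideanSpace ℝ (Fin d))
    (hLip : ∀ i y y', ‖gf i y - gf i y'‖ ≤ L * ‖y - y'‖)
    (v : Fin d → ℝ) (hv : ∀ j, ε ≤ v j ∧ v j ≤ G ^ 2)
    (xbar : EuclideanSpace ℝ (Fin d)) (x : Fin N → EuclideanSpace ℝ (Fin d))
    (hconsensus : ∀ i, ‖xbar - x i‖ ^ 2 ≤ 4 * ((k : ℝ) - 1) ^ 2 * α ^ 2 * (d : ℝ) * G ^ 2 / ε) :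
    ∑ j : Fin d, (((1 / (N : ℝ)) * ∑ i : Fin N, gf i (x i) j) / (v j) ^ ((1 : ℝ) / 4)) ^ 2
      ≥ (1 / 2) * ∑ j : Fin d,
            (((1 / (N : ℝ)) * ∑ i : Fin N, gf i xbar j) / (v j) ^ ((1 : ℝ) / 4)) ^ 2
        - 4 * L ^ 2 * ((k : ℝ) - 1) ^ 2 * α ^ 2 * (d : ℝ) * G ^ 2 / ε ^ ((3 : ℝ) / 2) := by
  set B : ℝ := 4 * ((k : ℝ) - 1) ^ 2 * α ^ 2 * (d : ℝ) * G ^ 2 / ε with hBdef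
  have hvpos : ∀ j, 0 < v j := fun j => lt_of_lt_of_le hε (hv j).1
  set a : Fin d → ℝ := fun j => ((1 / (N : ℝ)) * ∑ i : Fin N, gf i (x i) j) / (v j) ^ ((1 : ℝ) / 4) with ha
  set b : Fin d → ℝ := fun j => ((1 / (N : ℝ)) * ∑ i : Fin N, gf i xbar j) / (v j) ^ ((1 : ℝ) / 4) with hb
  -- pointwise: b²/2 ≤ a² + (a-b)²
  have hpt : ∀ j ∈ Finset.univ (α := Fin d),
      (1/2 : ℝ) * b j ^ 2 ≤ a j ^ 2 + (a j - b j) ^ 2 := by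
    intro j _
    nlinarith [sq_nonneg (2 * a j - b j)]
  have hsum : (1/2 : ℝ) * ∑ j : Fin d, b j ^ 2
      ≤ ∑ j : Fin d, a j ^ 2 + ∑ j : Fin d, (a j - b j) ^ 2 := by
    rw [Finset.mul_sum, ← Finset.sum_add_distrib]
    exact Finset.sum_le_sum hpt
  -- bound the error term
  have herr : ∑ j : Fin d, (a j - b j) ^ 2 ≤ L ^ 2 * B / ε ^ ((1:ℝ)/2) := by
    have step1 : ∀ j, (a j - b j) ^ 2
        ≤ ((1 / (N : ℝ)) * ∑ i : Fin N, (gf i (x i) j - gf i xbar j)) ^ 2 / ε ^ ((1:ℝ)/2) := by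
      intro j
      have hab : a j - b j
          = ((1 / (N : ℝ)) * ∑ i : Fin N, (gf i (x i) j - gf i xbar j)) / (v j) ^ ((1 : ℝ) / 4) := by
        simp only [ha, hb, Finset.sum_sub_distrib, mul_sub]
        ring
      rw [hab, div_pow]
      have hvp : ((v j) ^ ((1 : ℝ) / 4)) ^ 2 = (v j) ^ ((1:ℝ)/2) := by
        rw [← Real.rpow_natCast ((v j) ^ ((1:ℝ)/4)) 2, ← Real.rpow_mul (hvpos j).le]
        norm_num
      rw [hvp]
      exact div_le_div_of_nonneg_left (sq_nonneg _) (Real.rpow_pos_of_pos hε _)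
        (Real.rpow_le_rpow hε.le (hv j).1 (by norm_num))
    calc ∑ j : Fin d, (a j - b j) ^ 2
        ≤ ∑ j : Fin d, ((1 / (N : ℝ)) * ∑ i : Fin N, (gf i (x i) j - gf i xbar j)) ^ 2 / ε ^ ((1:ℝ)/2) :=
          Finset.sum_le_sum fun j _ => step1 j
      _ = (∑ j : Fin d, ((1 / (N : ℝ)) * ∑ i : Fin N, (gf i (x i) j - gf i xbar j)) ^ 2) / ε ^ ((1:ℝ)/2) := by
          rw [Finset.sum_div]
      _ ≤ (L ^ 2 * B) / ε ^ ((1:ℝ)/2) := by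
          gcongr ?_ / _
          -- Jensen + Lipschitz
          have jensen : ∀ j, ((1 / (N : ℝ)) * ∑ i : Fin N, (gf i (x i) j - gf i xbar j)) ^ 2
              ≤ (1 / (N : ℝ)) * ∑ i : Fin N, (gf i (x i) j - gf i xbar j) ^ 2 := by
            intro j
            have h1 := sq_sum_le_card_mul_sum_sq (s := Finset.univ)
              (f := fun i : Fin N => gf i (x i) j - gf i xbar j)
            have hNpos : (0:ℝ) < N := by exact_mod_cast hN
            rw [mul_pow]
            rw [Finset.card_univ, Fintype.card_fin] at h1
            calc ((1 / (N : ℝ)))^2 * (∑ i : Fin N, (gf i (x i) j - gf i xbar j)) ^ 2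
                ≤ (1 / (N : ℝ))^2 * ((N : ℝ) * ∑ i : Fin N, (gf i (x i) j - gf i xbar j) ^ 2) := by
                  gcongr
              _ = (1 / (N : ℝ)) * ∑ i : Fin N, (gf i (x i) j - gf i xbar j) ^ 2 := by
                  field_simp
          calc ∑ j : Fin d, ((1 / (N : ℝ)) * ∑ i : Fin N, (gf i (x i) j - gf i xbar j)) ^ 2
              ≤ ∑ j : Fin d, (1 / (N : ℝ)) * ∑ i : Fin N, (gf i (x i) j - gf i xbar j) ^ 2 :=
                Finset.sum_le_sum fun j _ => jensen j
            _ = (1 / (N : ℝ)) * ∑ i : Fin N, ∑ j : Fin d, (gf i (x i) j - gf i xbar j) ^ 2 := by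
                rw [← Finset.mul_sum, Finset.sum_comm]
            _ ≤ (1 / (N : ℝ)) * ∑ i : Fin N, L ^ 2 * B := by
                gcongr with i _
                have hnorm : ∑ j : Fin d, (gf i (x i) j - gf i xbar j) ^ 2
                    = ‖gf i (x i) - gf i xbar‖ ^ 2 := by
                  rw [EuclideanSpace.norm_eq, Real.sq_sqrt (by positivity)]
                  refine Finset.sum_congr rfl fun j _ => ?_
                  simp [PiLp.sub_apply, Real.norm_eq_abs, sq_abs]
                rw [hnorm]
                have h2 : ‖gf i (x i) - gf i xbar‖ ≤ L * ‖x i - xbar‖ := hLip i _ _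
                have h3 : ‖x i - xbar‖ ^ 2 ≤ B := by
                  rw [← norm_neg, neg_sub]; exact hconsensus i
                calc ‖gf i (x i) - gf i xbar‖ ^ 2 ≤ (L * ‖x i - xbar‖) ^ 2 := by
                      gcongr
                  _ = L ^ 2 * ‖x i - xbar‖ ^ 2 := by ring
                  _ ≤ L ^ 2 * B := by gcongr
            _ = L ^ 2 * B := by
                rw [Finset.sum_const, Finset.card_univ, Fintype.card_fin, nsmul_eq_mul]
                field_simp
  have hC : L ^ 2 * B / ε ^ ((1:ℝ)/2)
      = 4 * L ^ 2 * ((k : ℝ) - 1) ^ 2 * α ^ 2 * (d : ℝ) * G ^ 2 / ε ^ ((3 : ℝ) / 2) := by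
    rw [hBdef, show (3:ℝ)/2 = 1 + 1/2 by norm_num, Real.rpow_add hε, Real.rpow_one]
    have : ε ^ ((1:ℝ)/2) ≠ 0 := ne_of_gt (Real.rpow_pos_of_pos hε _)
    field_simp
  have := herr
  rw [hC] at this
  have final := hsum
  linarith
end
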